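/- Let A, B be bounded selfadjoint operators on a complex Hilbert space H with B indefinite, and assume I_≥(A,B) = [λ₋, λ₊] with λ₋ = λ₊. Then M₋ = M₊ and ker(A + λ₊B) = M₊ ∪ (Q(A) ∩ Q(B)). -/

import Mathlib

/-!
Since `λ₋ = λ₊`, the two sets `M₋`, `M₊` are literally the same, and `T = A + λ₊ B` is a positive
operator. For a positive operator the Cauchy–Schwarz inequality
`(re ⟪T x, y⟫)² ≤ re ⟪T x, x⟫ · re ⟪T y, y⟫` shows that `T x = 0` as soon as `re ⟪T x, x⟫ = 0`,
so `ker T` is the zero set of `q_A + λ₊ q_B`; splitting according to whether `q_B x` vanishes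
gives `M₊ ∪ (Q(A) ∩ Q(B))`.
-/

open scoped InnerProductSpace

noncomputable section

variable {H : Type*} [NormedAddCommGroup H] [InnerProductSpace ℂ H] [CompleteSpace H]

/-- The (real) quadratic form associated to an operator. -/
def qf (T : H →L[ℂ] H) (x : H) : ℝ := (⟪T x, x⟫_ℂ).re

/-- Positive semidefinite operator. -/
def PosSemidef (T : H →L[ℂ] H) : Prop := ∀ x, 0 ≤ qf T x

/-- Positive definite operator (uniformly positive). -/
def PosDef (T : H →L[ℂ] H) : Prop := ∃ α > 0, ∀ x, α * ‖x‖ ^ 2 ≤ qf T x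

/-- The set of parameters where the pencil `A + ρ B` is positive semidefinite. -/
def Ige (A B : H →L[ℂ] H) : Set ℝ := {ρ | PosSemidef (A + (ρ : ℂ) • B)}

/-- The set of parameters where the pencil `A + ρ B` is positive definite. -/
def Igt (A B : H →L[ℂ] H) : Set ℝ := {ρ | PosDef (A + (ρ : ℂ) • B)}

/-- An operator is indefinite if its quadratic form takes both signs. -/
def Indefinite (T : H →L[ℂ] H) : Prop := (∃ x, 0 < qf T x) ∧ (∃ x, qf T x < 0)

namespace ContinuousLinearMap

open RCLike

variable {𝕜 E : Type*} [RCLike 𝕜] [NormedAddCommGroup E] [InnerProductSpace 𝕜 E]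
  {T : E →L[𝕜] E}

theorem IsPositive.re_inner_sq_le (hT : T.IsPositive) (x y : E) :
    re ⟪T x, y⟫_𝕜 ^ 2 ≤ re ⟪T x, x⟫_𝕜 * re ⟪T y, y⟫_𝕜 := by
  have hexpand (t : ℝ) : re ⟪T (x + (t : 𝕜) • y), x + (t : 𝕜) • y⟫_𝕜
      = re ⟪T y, y⟫_𝕜 * (t * t) + 2 * re ⟪T x, y⟫_𝕜 * t + re ⟪T x, x⟫_𝕜 := by
    have hsymm : re ⟪T y, x⟫_𝕜 = re ⟪T x, y⟫_𝕜 := by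
      rw [hT.inner_left_eq_inner_right, ← inner_conj_symm, conj_re]
    simp only [map_add, map_smul, inner_add_left, inner_add_right, inner_smul_left,
      inner_smul_right, conj_ofReal, re_ofReal_mul, hsymm]
    ring
  have hdisc := discrim_le_zero fun t ↦ hexpand t ▸ hT.re_inner_nonneg_left (x + (t : 𝕜) • y)
  rw [discrim] at hdisc
  linarith

theorem IsPositive.apply_eq_zero_iff (hT : T.IsPositive) (x : E) :
    T x = 0 ↔ re ⟪T x, x⟫_𝕜 = 0 := by
  refine ⟨fun h ↦ by simp [h], fun hx ↦ ?_⟩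
  have hcs := hT.re_inner_sq_le x (T x)
  rw [hx, zero_mul] at hcs
  exact re_inner_self_nonpos.1 (pow_eq_zero_iff two_ne_zero |>.1 (hcs.antisymm (sq_nonneg _))).le

end ContinuousLinearMap

lemma add_mul_eq_zero_iff_div_eq (a b ρ : ℝ) :
    a + ρ * b = 0 ↔ (b ≠ 0 ∧ a / b = -ρ) ∨ (a = 0 ∧ b = 0) := by
  by_cases hb : b = 0
  · simp [hb]
  · rw [div_eq_iff hb]
    constructor <;> intro h
    · exact Or.inl ⟨hb, by linarith⟩
    · rcases h with ⟨-, h⟩ | ⟨-, h⟩ <;> [linarith; exact absurd h hb]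

lemma qf_add_ofReal_smul {E : Type*} [NormedAddCommGroup E] [InnerProductSpace ℂ E]
    (A B : E →L[ℂ] E) (ρ : ℝ) (x : E) : qf (A + (ρ : ℂ) • B) x = qf A x + ρ * qf B x := by
  simp [qf]

lemma isPositive_of_mem_Ige {A B : H →L[ℂ] H} (hA : IsSelfAdjoint A) (hB : IsSelfAdjoint B)
    {ρ : ℝ} (hρ : ρ ∈ Ige A B) : (A + (ρ : ℂ) • B).IsPositive :=
  ContinuousLinearMap.isPositive_def'.2
    ⟨hA.add ((isSelfAdjoint_iff.2 (Complex.conj_ofReal ρ)).smul hB), hρ⟩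

lemma ker_eq_of_mem_Ige {A B : H →L[ℂ] H} (hA : IsSelfAdjoint A) (hB : IsSelfAdjoint B)
    {ρ : ℝ} (hρ : ρ ∈ Ige A B) :
    (LinearMap.ker ((A + (ρ : ℂ) • B : H →L[ℂ] H) : H →ₗ[ℂ] H) : Set H)
      = {x : H | qf B x ≠ 0 ∧ qf A x / qf B x = -ρ}
          ∪ ({x : H | qf A x = 0} ∩ {x : H | qf B x = 0}) := by
  ext x
  rw [SetLike.mem_coe, LinearMap.mem_ker, ContinuousLinearMap.coe_coe,
    (isPositive_of_mem_Ige hA hB hρ).apply_eq_zero_iff]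
  change qf _ x = 0 ↔ _
  rw [qf_add_ofReal_smul, add_mul_eq_zero_iff_div_eq]
  rfl

theorem stmt17_general (A B : H →L[ℂ] H) (hA : IsSelfAdjoint A) (hB : IsSelfAdjoint B)
    (lm lp : ℝ) (heq : lm = lp) (hI : Ige A B = Set.Icc lm lp) :
    {x : H | qf B x ≠ 0 ∧ qf A x / qf B x = -lp}
        = {x : H | qf B x ≠ 0 ∧ qf A x / qf B x = -lm} ∧
    (LinearMap.ker ((A + (lp : ℂ) • B : H →L[ℂ] H) : H →ₗ[ℂ] H) : Set H)
        = {x : H | qf B x ≠ 0 ∧ qf A x / qf B x = -lm}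
            ∪ ({x : H | qf A x = 0} ∩ {x : H | qf B x = 0}) := by
  subst heq
  have hlm : lm ∈ Ige A B := hI ▸ Set.left_mem_Icc.2 le_rfl
  exact ⟨rfl, ker_eq_of_mem_Ige hA hB hlm⟩

theorem stmt17 (A B : H →L[ℂ] H) (hA : IsSelfAdjoint A) (hB : IsSelfAdjoint B)
    (hBind : Indefinite B)
    (lm lp : ℝ) (heq : lm = lp) (hI : Ige A B = Set.Icc lm lp) :
    {x : H | qf B x ≠ 0 ∧ qf A x / qf B x = -lp}
        = {x : H | qf B x ≠ 0 ∧ qf A x / qf B x = -lm} ∧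
    (LinearMap.ker ((A + (lp : ℂ) • B : H →L[ℂ] H) : H →ₗ[ℂ] H) : Set H)
        = {x : H | qf B x ≠ 0 ∧ qf A x / qf B x = -lm}
            ∪ ({x : H | qf A x = 0} ∩ {x : H | qf B x = 0}) :=
  stmt17_general A B hA hB lm lp heq hI
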